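/- arXiv:1107.1983 — 5 statements merged into one kernel-verified Lean document; each statement's English description precedes it below -/
import Mathlib

section
/- Let J be a closed two-sided ideal in a C*-algebra B and let A be a C*-subalgebra of B. If there exists γ < 1 such that for every x ∈ A there is y ∈ J with ‖x − y‖ ≤ γ‖x‖, then A ⊆ J. -/
/-!
Let `D x` be the distance from `x` to `J`. It is submultiplicative, since `(x - j) * (y - k)`
differs from `x * y` by an element of `J`. A positive `b ∈ A` is the square of `√b ∈ A`, so
`D b ≤ (D √b)² ≤ γ² ‖√b‖² = γ² ‖b‖`; iterating, `D b ≤ γ ^ 2 ^ k * ‖b‖ → 0`, and `b ∈ J`.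
For arbitrary `x ∈ A`, the positive element `e = f (x⋆x)` of `A`, with `f t = min (t / ε²) 1`,
lies in `J`, and `‖x - x e‖² = ‖g (x⋆x)‖ ≤ ε²` where `g t = t (1 - f t)² ≤ ε²` for `t ≥ 0`;
so `x ∈ closure J = J`.
-/

open Metric Filter Topology

theorem infDist_le_norm_sub_of_mem {E : Type*} [SeminormedAddCommGroup E] {s : Set E} (x : E)
    {y : E} (hy : y ∈ s) : infDist x s ≤ ‖x - y‖ :=
  dist_eq_norm x y ▸ infDist_le_dist_of_mem hy

section DistToIdeal

variable {R : Type*} [NonUnitalSeminormedRing R] (J : TwoSidedIdeal R)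

theorem TwoSidedIdeal.infDist_mul_le_norm_mul_norm (x y : R) {j k : R} (hj : j ∈ J) (hk : k ∈ J) :
    infDist (x * y) (J : Set R) ≤ ‖x - j‖ * ‖y - k‖ := by
  have hmem : x * k + j * y - j * k ∈ J :=
    J.sub_mem (J.add_mem (J.mul_mem_left _ _ hk) (J.mul_mem_right _ _ hj)) (J.mul_mem_left _ _ hk)
  calc infDist (x * y) (J : Set R) ≤ ‖x * y - (x * k + j * y - j * k)‖ :=
        infDist_le_norm_sub_of_mem _ hmem
    _ = ‖(x - j) * (y - k)‖ := by congr 1; noncomm_ring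
    _ ≤ ‖x - j‖ * ‖y - k‖ := norm_mul_le _ _

theorem TwoSidedIdeal.infDist_mul_le (x y : R) :
    infDist (x * y) (J : Set R) ≤ infDist x (J : Set R) * infDist y (J : Set R) := by
  calc infDist (x * y) (J : Set R) ≤ ⨅ j : (J : Set R), ⨅ k : (J : Set R), dist x j * dist y k :=
        le_ciInf fun j ↦ le_ciInf fun k ↦ by
          simpa only [dist_eq_norm] using J.infDist_mul_le_norm_mul_norm x y j.2 k.2
    _ = infDist x (J : Set R) * infDist y (J : Set R) := by
        simp only [infDist_eq_iInf (x := y), Real.mul_iInf_of_nonneg dist_nonneg,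
          infDist_eq_iInf (x := x), Real.iInf_mul_of_nonneg (Real.iInf_nonneg fun _ ↦ dist_nonneg)]

end DistToIdeal

theorem mul_one_sub_min_div_one_sq_le {t δ : ℝ} (ht : 0 ≤ t) (hδ : 0 < δ) :
    t * (1 - min (t / δ) 1) ^ 2 ≤ δ := by
  rcases le_or_gt t δ with htδ | htδ
  · have h₀ : 0 ≤ t / δ := div_nonneg ht hδ.le
    have h₁ : t / δ ≤ 1 := (div_le_one hδ).mpr htδ
    rw [min_eq_left h₁]
    calc t * (1 - t / δ) ^ 2 ≤ t * 1 := by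
          gcongr
          exact pow_le_one₀ (sub_nonneg.mpr h₁) (by linarith)
      _ ≤ δ := by linarith
  · rw [min_eq_right ((one_le_div hδ).mpr htδ.le)]
    simpa using hδ.le

section CStarAlgebra

variable {B : Type*} [NonUnitalCStarAlgebra B]

theorem norm_sub_mul_cfcₙ_star_mul_self_sq (x : B) {f : ℝ → ℝ} (hf : Continuous f)
    (hf₀ : f 0 = 0) :
    ‖x - x * cfcₙ f (star x * x)‖ ^ 2 = ‖cfcₙ (fun t ↦ t * (1 - f t) ^ 2) (star x * x)‖ := by
  set b := star x * x
  set e := cfcₙ f b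
  have he : IsSelfAdjoint e := cfcₙ_predicate f b
  have hbe : cfcₙ (fun t ↦ t * f t) b = b * e := by
    rw [cfcₙ_mul _ _ b (by fun_prop) rfl hf.continuousOn hf₀, cfcₙ_id' ℝ b]
  have heb : cfcₙ (fun t ↦ f t * t) b = e * b := by
    rw [cfcₙ_mul _ _ b hf.continuousOn hf₀ (by fun_prop) rfl, cfcₙ_id' ℝ b]
  have hebe : cfcₙ (fun t ↦ f t * (t * f t)) b = e * (b * e) := by
    rw [cfcₙ_mul _ _ b hf.continuousOn hf₀ (by fun_prop) (by simp [hf₀]), hbe]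
  have hpoly : cfcₙ (fun t ↦ t * (1 - f t) ^ 2) b = b - b * e - e * b + e * (b * e) := by
    calc cfcₙ (fun t ↦ t * (1 - f t) ^ 2) b
        = cfcₙ (fun t ↦ t - t * f t - f t * t + f t * (t * f t)) b :=
          cfcₙ_congr fun t _ ↦ by ring
      _ = b - b * e - e * b + e * (b * e) := by
          rw [cfcₙ_add _ _ b (by fun_prop) (by simp [hf₀]) (by fun_prop) (by simp [hf₀]),
            cfcₙ_sub _ _ b (by fun_prop) (by simp [hf₀]) (by fun_prop) (by simp [hf₀]),
            cfcₙ_sub _ _ b (by fun_prop) rfl (by fun_prop) (by simp [hf₀]), cfcₙ_id' ℝ b,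
            hbe, heb, hebe]
  have hexpand : star (x - x * e) * (x - x * e) = b - b * e - e * b + e * (b * e) := by
    rw [star_sub, star_mul, he.star_eq]
    simp only [b]
    noncomm_ring
  rw [hpoly, ← hexpand, CStarRing.norm_star_mul_self, sq]

variable [PartialOrder B] [StarOrderedRing B]
  {A : NonUnitalStarSubalgebra ℂ B} [IsClosed (A : Set B)] {J : TwoSidedIdeal B}

theorem CFC.sqrt_mem_of_isClosed {b : B} (hb : b ∈ A) (hb₀ : 0 ≤ b) : CFC.sqrt b ∈ A := by
  rw [CFC.sqrt, cfcₙ_nnreal_eq_real _ _ hb₀]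
  exact cfcₙ_mem _ hb

theorem infDist_le_sq_mul_norm_of_nonneg {c : ℝ}
    (h : ∀ b ∈ A, 0 ≤ b → infDist b (J : Set B) ≤ c * ‖b‖) {b : B} (hb : b ∈ A) (hb₀ : 0 ≤ b) :
    infDist b (J : Set B) ≤ c ^ 2 * ‖b‖ := by
  set s := CFC.sqrt b
  have hs := h s (CFC.sqrt_mem_of_isClosed hb hb₀) (CFC.sqrt_nonneg b)
  calc infDist b (J : Set B) = infDist (s * s) J := by rw [CFC.sqrt_mul_sqrt_self b]
    _ ≤ infDist s J * infDist s J := J.infDist_mul_le s s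
    _ ≤ (c * ‖s‖) * (c * ‖s‖) := mul_le_mul hs hs infDist_nonneg (infDist_nonneg.trans hs)
    _ = c ^ 2 * ‖b‖ := by
        rw [CFC.norm_sqrt b, mul_mul_mul_comm, Real.mul_self_sqrt (norm_nonneg b), sq]

theorem infDist_le_pow_two_pow_mul_norm_of_nonneg {c : ℝ}
    (h : ∀ x ∈ A, infDist x (J : Set B) ≤ c * ‖x‖) (k : ℕ) {b : B} (hb : b ∈ A) (hb₀ : 0 ≤ b) :
    infDist b (J : Set B) ≤ c ^ 2 ^ k * ‖b‖ := by
  induction k generalizing b with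
  | zero => simpa using h b hb
  | succ k ih =>
    rw [pow_succ, pow_mul]
    exact infDist_le_sq_mul_norm_of_nonneg (fun b hb hb₀ ↦ ih hb hb₀) hb hb₀

variable [IsClosed (J : Set B)]

theorem mem_of_nonneg_of_infDist_le {c : ℝ} (hc₀ : 0 ≤ c) (hc : c < 1)
    (h : ∀ x ∈ A, infDist x (J : Set B) ≤ c * ‖x‖) {b : B} (hb : b ∈ A) (hb₀ : 0 ≤ b) : b ∈ J := by
  rw [← SetLike.mem_coe, IsClosed.mem_iff_infDist_zero ‹_› ⟨0, J.zero_mem⟩]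
  have hlim : Tendsto (fun k : ℕ ↦ c ^ 2 ^ k * ‖b‖) atTop (𝓝 0) := by
    simpa using ((tendsto_pow_atTop_nhds_zero_of_lt_one hc₀ hc).comp
      (tendsto_pow_atTop_atTop_of_one_lt (one_lt_two (α := ℕ)))).mul_const ‖b‖
  exact le_antisymm (ge_of_tendsto' hlim fun k ↦
    infDist_le_pow_two_pow_mul_norm_of_nonneg h k hb hb₀) infDist_nonneg

theorem mem_of_forall_nonneg_mem (h : ∀ b ∈ A, 0 ≤ b → b ∈ J) {x : B} (hx : x ∈ A) : x ∈ J := by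
  rw [← SetLike.mem_coe, IsClosed.mem_iff_infDist_zero ‹_› ⟨0, J.zero_mem⟩]
  refine le_antisymm (le_of_forall_pos_le_add fun ε hε ↦ ?_) infDist_nonneg
  set f : ℝ → ℝ := fun t ↦ min (t / ε ^ 2) 1
  have hf : Continuous f := by fun_prop
  set e := cfcₙ f (star x * x)
  have hxx : 0 ≤ star x * x := star_mul_self_nonneg x
  have heJ : e ∈ J := h e (cfcₙ_mem _ (mul_mem (star_mem hx) hx))
    (cfcₙ_nonneg fun t ht ↦ le_min (div_nonneg (quasispectrum_nonneg_of_nonneg _ hxx t ht)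
      (sq_nonneg ε)) zero_le_one)
  have hsq : ‖x - x * e‖ ^ 2 ≤ ε ^ 2 := by
    rw [norm_sub_mul_cfcₙ_star_mul_self_sq x hf (by simp [f])]
    refine norm_cfcₙ_le fun t ht ↦ ?_
    have ht₀ := quasispectrum_nonneg_of_nonneg _ hxx t ht
    rw [Real.norm_of_nonneg (by positivity)]
    exact mul_one_sub_min_div_one_sq_le ht₀ (by positivity)
  calc infDist x (J : Set B) ≤ ‖x - x * e‖ :=
        infDist_le_norm_sub_of_mem x (J.mul_mem_left x e heJ)
    _ ≤ ε := pow_le_pow_iff_left₀ (norm_nonneg _) hε.le two_ne_zero |>.mp hsq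
    _ = 0 + ε := (zero_add ε).symm

end CStarAlgebra

/-- If `J` is a closed two-sided ideal in a C*-algebra `B`, `A` is a (closed) C*-subalgebra
of `B`, and `A` is nearly contained in `J` with constant `γ < 1`, then `A ⊆ J`. -/
theorem stmt_0 {B : Type*} [NonUnitalCStarAlgebra B]
    (A : NonUnitalStarSubalgebra ℂ B) (hA : IsClosed (A : Set B))
    (J : TwoSidedIdeal B) (hJ : IsClosed (J : Set B))
    (γ : ℝ) (hγ : γ < 1)
    (hnear : ∀ x ∈ A, ∃ y ∈ J, ‖x - y‖ ≤ γ * ‖x‖) :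
    ∀ x ∈ A, x ∈ J := by
  let := CStarAlgebra.spectralOrder B
  have := CStarAlgebra.spectralOrderedRing B
  have hdist : ∀ x ∈ A, infDist x (J : Set B) ≤ max γ 0 * ‖x‖ := fun x hx ↦ by
    obtain ⟨y, hy, hxy⟩ := hnear x hx
    calc infDist x (J : Set B) ≤ ‖x - y‖ := infDist_le_norm_sub_of_mem x hy
      _ ≤ max γ 0 * ‖x‖ := hxy.trans (by gcongr; exact le_max_left γ 0)
  exact fun x hx ↦ mem_of_forall_nonneg_mem (fun b hb hb₀ ↦ mem_of_nonneg_of_infDist_le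
    (le_max_right γ 0) (max_lt hγ one_pos) hdist hb hb₀) hx
end

section
/- Let M ⊆ B(H) be a von Neumann algebra, z a central projection of M, and J = Mz. Suppose M satisfies: for all x ∈ B(H), d(x, M') ≤ k·‖ad(x)|_M‖. Then for all t ∈ B(H), d(t, J') ≤ (k+1)·‖ad(t)|_J‖. -/
variable {H : Type*} [NormedAddCommGroup H] [InnerProductSpace ℂ H] [CompleteSpace H]

/-- The norm of the inner derivation `ad(x) : a ↦ x*a - a*x` restricted to a subset
`S ⊆ B(H)`, computed as the supremum over the unit ball of `S`. -/
noncomputable def derivRestrictNorm (S : Set (H →L[ℂ] H)) (x : H →L[ℂ] H) : ℝ :=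
  sSup ((fun a => ‖x * a - a * x‖) '' (S ∩ Metric.closedBall 0 1))

/-- The local distance property `LD_k` for a subset `S ⊆ B(H)`:
`d(x, S') ≤ k·‖ad(x)|_S‖` for every `x ∈ B(H)`. -/
def HasLD (S : Set (H →L[ℂ] H)) (k : ℝ) : Prop :=
  ∀ x : H →L[ℂ] H, Metric.infDist x (Set.centralizer S) ≤ k * derivRestrictNorm S x

set_option linter.unusedSectionVars false

lemma drn_bdd (S : Set (H →L[ℂ] H)) (x : H →L[ℂ] H) :
    BddAbove ((fun a => ‖x * a - a * x‖) '' (S ∩ Metric.closedBall 0 1)) := by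
  refine ⟨2 * ‖x‖, ?_⟩
  rintro r ⟨a, ⟨-, ha⟩, rfl⟩
  rw [Metric.mem_closedBall, dist_zero_right] at ha
  have h1 := norm_mul_le x a
  have h2 := norm_mul_le a x
  have := norm_sub_le (x*a) (a*x)
  nlinarith [norm_nonneg x, norm_nonneg a]

lemma le_drn (S : Set (H →L[ℂ] H)) (x a : H →L[ℂ] H) (ha : a ∈ S) (han : ‖a‖ ≤ 1) :
    ‖x * a - a * x‖ ≤ derivRestrictNorm S x :=
  le_csSup (drn_bdd S x) ⟨a, ⟨ha, by simpa [Metric.mem_closedBall, dist_zero_right] using han⟩, rfl⟩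

lemma drn_nonneg (S : Set (H →L[ℂ] H)) (x : H →L[ℂ] H) (h0 : (0 : H →L[ℂ] H) ∈ S) :
    0 ≤ derivRestrictNorm S x := by
  have := le_drn S x 0 h0 (by simp)
  simpa using this

lemma drn_le (S : Set (H →L[ℂ] H)) (x : H →L[ℂ] H) (c : ℝ) (h0 : (0 : H →L[ℂ] H) ∈ S)
    (h : ∀ a ∈ S, ‖a‖ ≤ 1 → ‖x * a - a * x‖ ≤ c) : derivRestrictNorm S x ≤ c := by
  refine csSup_le ⟨‖x * 0 - 0 * x‖, ⟨0, ⟨h0, by simp⟩, rfl⟩⟩ ?_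
  rintro r ⟨a, ⟨haS, hab⟩, rfl⟩
  rw [Metric.mem_closedBall, dist_zero_right] at hab
  exact h a haS hab

/-- If a von Neumann algebra `M ⊆ B(H)` has property `LD_k` and `z` is a central projection
of `M`, then the weakly closed ideal `J = Mz` has property `LD_{k+1}`. -/
theorem stmt_4 (M : VonNeumannAlgebra H) (k : ℝ)
    (z : H →L[ℂ] H) (hzM : z ∈ M) (hz_sa : IsSelfAdjoint z) (hz_idem : z * z = z)
    (hz_central : ∀ m ∈ M, z * m = m * z)
    (hLD : HasLD (M : Set (H →L[ℂ] H)) k) :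
    HasLD {x | ∃ m ∈ M, x = m * z} (k + 1) := by
  intro t
  set J : Set (H →L[ℂ] H) := {x | ∃ m ∈ M, x = m * z} with hJdef
  have h0M : (0 : H →L[ℂ] H) ∈ (M : Set (H →L[ℂ] H)) := zero_mem _
  have h0J : (0 : H →L[ℂ] H) ∈ J := ⟨0, h0M, (zero_mul z).symm⟩
  have hJ_sub : J ⊆ (M : Set (H →L[ℂ] H)) := by
    rintro x ⟨m, hm, rfl⟩; exact mul_mem hm hzM
  have hz_norm : ‖z‖ ≤ 1 := by
    have h := CStarRing.norm_star_mul_self (x := z)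
    rw [hz_sa.star_eq, hz_idem] at h
    nlinarith [norm_nonneg z]
  set δ := derivRestrictNorm J t with hδdef
  have hδ0 : 0 ≤ δ := drn_nonneg J t h0J
  have h1c : (1 : H →L[ℂ] H) ∈ Set.centralizer (M : Set (H →L[ℂ] H)) :=
    fun m _ => by rw [mul_one, one_mul]
  rcases lt_or_ge k 0 with hk | hk
  · -- degenerate case k < 0
    have hMt := hLD t
    have hMt0 : 0 ≤ Metric.infDist t (Set.centralizer (M : Set (H →L[ℂ] H))) :=
      Metric.infDist_nonneg
    have hDM0 : 0 ≤ derivRestrictNorm (M : Set (H →L[ℂ] H)) t := drn_nonneg _ t h0M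
    have hDMz : derivRestrictNorm (M : Set (H →L[ℂ] H)) t = 0 := by nlinarith
    have hDJ : δ = 0 := by
      refine le_antisymm ?_ hδ0
      refine drn_le J t 0 h0J ?_
      intro a haJ han
      have := le_drn (M : Set (H →L[ℂ] H)) t a (hJ_sub haJ) han
      rw [hDMz] at this
      exact this
    have hsub : Set.centralizer (M : Set (H →L[ℂ] H)) ⊆ Set.centralizer J :=
      Set.centralizer_subset hJ_sub
    have hmono : Metric.infDist t (Set.centralizer J) ≤
        Metric.infDist t (Set.centralizer (M : Set (H →L[ℂ] H))) :=
      Metric.infDist_le_infDist_of_subset hsub ⟨1, h1c⟩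
    rw [hDJ]
    have : k * derivRestrictNorm (M : Set (H →L[ℂ] H)) t = 0 := by rw [hDMz, mul_zero]
    linarith
  · -- main case k ≥ 0
    -- basic projection identities
    have hzp : z * (1 - z) = 0 := by rw [mul_sub, mul_one, hz_idem, sub_self]
    have hpz : (1 - z) * z = 0 := by rw [sub_mul, one_mul, hz_idem, sub_self]
    -- ‖t*z - z*t‖ ≤ δ
    have hzJ : z ∈ J := ⟨z, hzM, hz_idem.symm⟩
    have h1 : ‖t * z - z * t‖ ≤ δ := le_drn J t z hzJ hz_norm
    -- ‖ad(z*t*z)|_M‖ ≤ δ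
    have h2 : derivRestrictNorm (M : Set (H →L[ℂ] H)) (z * t * z) ≤ δ := by
      refine drn_le _ _ δ h0M ?_
      intro a haM han
      have hza : z * a = a * z := hz_central a haM
      have e1 : z * (t * (a * z)) * z = z * t * z * a := by
        simp only [← mul_assoc]
        rw [mul_assoc (z * t * a) z z, hz_idem, mul_assoc (z * t) a z, ← hza, ← mul_assoc]
      have e2 : z * ((a * z) * t) * z = a * (z * t * z) := by
        simp only [← mul_assoc]
        rw [hza, mul_assoc a z z, hz_idem]
      have key : z * t * z * a - a * (z * t * z) = z * (t * (a * z) - (a * z) * t) * z := by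
        rw [mul_sub, sub_mul, e1, e2]
      rw [key]
      have haz : a * z ∈ J := ⟨a, haM, rfl⟩
      have hazn : ‖a * z‖ ≤ 1 := by
        have := norm_mul_le a z
        nlinarith [norm_nonneg a, norm_nonneg z]
      have hinner : ‖t * (a * z) - (a * z) * t‖ ≤ δ := le_drn J t (a * z) haz hazn
      have hn1 := norm_mul_le (z * (t * (a * z) - (a * z) * t)) z
      have hn2 := norm_mul_le z (t * (a * z) - (a * z) * t)
      nlinarith [norm_nonneg (t * (a * z) - (a * z) * t),
        norm_nonneg (z * (t * (a * z) - (a * z) * t)), norm_nonneg z]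
    have h3 : Metric.infDist (z * t * z) (Set.centralizer (M : Set (H →L[ℂ] H))) ≤ k * δ :=
      (hLD (z * t * z)).trans (by nlinarith)
    -- now the ε-argument
    refine le_of_forall_pos_le_add ?_
    intro ε hε
    have h4 : Metric.infDist (z * t * z) (Set.centralizer (M : Set (H →L[ℂ] H))) < k * δ + ε :=
      lt_of_le_of_lt h3 (by linarith)
    obtain ⟨c, hc, hdist⟩ := (Metric.infDist_lt_iff
      ⟨1, h1c⟩).mp h4
    -- the approximant
    set s : H →L[ℂ] H := c * z + (1 - z) * t * (1 - z) with hsdef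
    have hzc : z * c = c * z := hc z hzM
    have hsJ' : s ∈ Set.centralizer J := by
      rintro x ⟨m, hm, rfl⟩
      have hzm : z * m = m * z := hz_central m hm
      have hcm : m * c = c * m := hc m (by exact_mod_cast hm)
      have hpm : (1 - z) * m = m * (1 - z) := by
        rw [sub_mul, one_mul, mul_sub, mul_one, hzm]
      have L2 : (m * z) * ((1 - z) * t * (1 - z)) = 0 := by
        calc (m * z) * ((1 - z) * t * (1 - z)) = m * (z * (1 - z)) * (t * (1 - z)) := by
              noncomm_ring
          _ = 0 := by rw [hzp, mul_zero, zero_mul]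
      have R2 : ((1 - z) * t * (1 - z)) * (m * z) = 0 := by
        calc ((1 - z) * t * (1 - z)) * (m * z) = (1 - z) * t * ((1 - z) * m) * z := by
              noncomm_ring
          _ = (1 - z) * t * (m * (1 - z)) * z := by rw [hpm]
          _ = (1 - z) * t * m * ((1 - z) * z) := by noncomm_ring
          _ = 0 := by rw [hpz, mul_zero]
      have L1 : (m * z) * (c * z) = m * (c * z) := by
        calc (m * z) * (c * z) = m * ((z * c) * z) := by noncomm_ring
          _ = m * ((c * z) * z) := by rw [hzc]
          _ = m * (c * (z * z)) := by noncomm_ring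
          _ = m * (c * z) := by rw [hz_idem]
      have R1 : (c * z) * (m * z) = m * (c * z) := by
        calc (c * z) * (m * z) = c * ((z * m) * z) := by noncomm_ring
          _ = c * ((m * z) * z) := by rw [hzm]
          _ = c * (m * (z * z)) := by noncomm_ring
          _ = c * (m * z) := by rw [hz_idem]
          _ = (c * m) * z := by noncomm_ring
          _ = (m * c) * z := by rw [← hcm]
          _ = m * (c * z) := by noncomm_ring
      rw [hsdef, mul_add, add_mul, L2, R2, L1, R1]
    -- the symmetry u = z + z - 1
    set u : H →L[ℂ] H := z + z - 1 with hudef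
    have hu_star : star u = u := by
      rw [hudef, star_sub, star_add, hz_sa.star_eq, star_one]
    have hu2 : u * u = 1 := by
      calc u * u = (z*z) + (z*z) + ((z*z) + (z*z)) - z - z - z - z + 1 := by
            rw [hudef]; noncomm_ring
        _ = 1 := by rw [hz_idem]; noncomm_ring
    have hu_norm : ‖u‖ ≤ 1 := by
      have h := CStarRing.norm_star_mul_self (x := u)
      rw [hu_star, hu2] at h
      have h1 : ‖(1 : H →L[ℂ] H)‖ ≤ 1 := by
        rw [ContinuousLinearMap.one_def]
        exact ContinuousLinearMap.norm_id_le
      nlinarith [norm_nonneg u]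
    -- key corner identity
    have hkey : t - (z * t * z + (1 - z) * t * (1 - z)) = -(u * (t * z - z * t)) := by
      have lhs : t - (z * t * z + (1 - z) * t * (1 - z))
          = z * t + t * z - (z * t * z + z * t * z) := by noncomm_ring
      have rhs : -(u * (t * z - z * t))
          = (z*z) * t + (z*z) * t + t * z - z * t - (z * t * z + z * t * z) := by
        rw [hudef]; noncomm_ring
      rw [lhs, rhs, hz_idem]
      noncomm_ring
    have hfirst : ‖t - (z * t * z + (1 - z) * t * (1 - z))‖ ≤ δ := by
      rw [hkey, norm_neg]
      have := norm_mul_le u (t * z - z * t)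
      nlinarith [norm_nonneg (t * z - z * t), norm_nonneg u]
    have hsecond : ‖z * t * z - c * z‖ < k * δ + ε := by
      have e3 : (z * t * z - c) * z = z * t * z - c * z := by
        rw [sub_mul, mul_assoc (z * t) z z, hz_idem]
      rw [← e3]
      have hd : ‖z * t * z - c‖ < k * δ + ε := by
        rw [← dist_eq_norm]; exact hdist
      have := norm_mul_le (z * t * z - c) z
      nlinarith [norm_nonneg (z * t * z - c), norm_nonneg z, Metric.infDist_nonneg.trans h3,
        dist_nonneg.trans_lt hdist]
    have hts : t - s = (t - (z * t * z + (1 - z) * t * (1 - z))) + (z * t * z - c * z) := by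
      rw [hsdef]; abel
    have hfinal : Metric.infDist t (Set.centralizer J) ≤ dist t s :=
      Metric.infDist_le_dist_of_mem hsJ'
    rw [dist_eq_norm, hts] at hfinal
    have hnorm := norm_add_le (t - (z * t * z + (1 - z) * t * (1 - z))) (z * t * z - c * z)
    have hring : (k + 1) * δ = δ + k * δ := by ring
    exact hfinal.trans (hnorm.trans (by linarith))
end

section
/- Closed two-sided ideals in C*-algebras are proximinal: if J is a closed two-sided ideal of a C*-algebra B and b ∈ B, then there exists j ∈ J with ‖b − j‖ = d(b, J) = ‖b + J‖_{B/J}. -/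
/-!
Let `x = b⋆b` and `d = dist(b, J)`. The function `a ↦ dist(a, J)` is submultiplicative and, since
closed ideals are self-adjoint, star-invariant; hence `dist(x, J) ≤ d²`. For `s > d²`, peeling `n`
factors of `x` off `(x - s)₊` gives `dist((x - s)₊, J) ≤ d² (d²/s)ⁿ → 0`, so `(x - s)₊ ∈ J`, and
letting `s ↓ d²` also `(x - d²)₊ ∈ J`. With `g(u) = (1 - d²/u)₊`, a multiple of `(u - d²)₊`, the
element `j = b g(x)` lies in `J` and `‖b - j‖² = ‖x (1 - g(x))²‖ ≤ sup_u min(u, d⁴/u) ≤ d²`.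
Self-adjointness of `J` comes from the same estimate applied to `j⋆`, with `x = j j⋆ ∈ J`.
-/

open Metric Filter Topology

namespace TwoSidedIdeal

lemma infDist_mul_le_s9 {R : Type*} [NonUnitalSeminormedRing R] (J : TwoSidedIdeal R) (a b : R) :
    infDist (a * b) (J : Set R) ≤ infDist a J * infDist b J := by
  have : Nonempty (J : Set R) := ⟨⟨0, J.zero_mem⟩⟩
  rw [infDist_eq_iInf (x := a), infDist_eq_iInf (x := b),
    Real.iInf_mul_of_nonneg (Real.iInf_nonneg fun _ => dist_nonneg)]
  refine le_ciInf fun j => ?_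
  rw [Real.mul_iInf_of_nonneg dist_nonneg]
  refine le_ciInf fun k => ?_
  have hmem : (j : R) * b + a * k - j * k ∈ J :=
    J.sub_mem (J.add_mem (J.mul_mem_right _ _ j.2) (J.mul_mem_left _ _ k.2))
      (J.mul_mem_right _ _ j.2)
  calc infDist (a * b) J ≤ ‖a * b - (j * b + a * k - j * k)‖ :=
        (infDist_le_dist_of_mem hmem).trans_eq (dist_eq_norm _ _)
    _ = ‖(a - j) * (b - k)‖ := by congr 1; noncomm_ring
    _ ≤ dist a j * dist b k := by rw [dist_eq_norm, dist_eq_norm]; exact norm_mul_le _ _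

lemma infDist_star {R : Type*} [NonUnitalSeminormedRing R] [StarRing R] [NormedStarGroup R]
    (J : TwoSidedIdeal R) (hJ : ∀ j ∈ J, star j ∈ J) (a : R) :
    infDist (star a) (J : Set R) = infDist a J := by
  have : star '' (J : Set R) = J :=
    Set.ext fun j => ⟨by rintro ⟨k, hk, rfl⟩; exact hJ k hk,
      fun hj => ⟨star j, hJ j hj, star_star j⟩⟩
  rw [← infDist_image star_isometry (x := a), this]

end TwoSidedIdeal

lemma continuous_div_self_of_eq_zero {φ : ℝ → ℝ} (hφ : Continuous φ) {δ : ℝ} (hδ : 0 < δ)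
    (h : ∀ t ≤ δ, φ t = 0) : Continuous fun t => φ t / t := by
  have : (fun t => φ t / t) = fun t => φ t / max t δ := by
    funext t
    rcases le_or_gt t δ with ht | ht
    · simp [h t ht]
    · rw [max_eq_left ht.le]
  rw [this]
  exact hφ.div (continuous_id.max continuous_const) fun t => (hδ.trans_le (le_max_right t δ)).ne'

lemma norm_max_sub_div_pow_succ_le {s : ℝ} (hs : 0 < s) (n : ℕ) (t : ℝ) :
    ‖max (t - s) 0 / t ^ (n + 1)‖ ≤ (s ^ n)⁻¹ := by
  rcases le_or_gt t s with ht | ht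
  · simp only [max_eq_right (sub_nonpos.2 ht), zero_div, norm_zero]
    positivity
  have ht0 : 0 < t := hs.trans ht
  rw [max_eq_left (sub_nonneg.2 ht.le), Real.norm_of_nonneg (by positivity)]
  calc (t - s) / t ^ (n + 1) ≤ t / t ^ (n + 1) := by gcongr; linarith
    _ = (t ^ n)⁻¹ := by rw [pow_succ]; field_simp
    _ ≤ (s ^ n)⁻¹ := by gcongr

/-- Equal to `max (1 - r / u) 0` for `u > 0`; the factorisation through `max (u - r) 0` with a
cofactor vanishing at `0` makes `cfcₙ (cutoff r)` a product in the non-unital calculus. -/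
noncomputable def cutoff (r u : ℝ) : ℝ := u / max u r ^ 2 * max (u - r) 0

lemma continuous_div_max_sq {r : ℝ} (hr : 0 < r) : Continuous fun u : ℝ => u / max u r ^ 2 :=
  continuous_id.div ((continuous_id.max continuous_const).pow 2) fun u =>
    pow_ne_zero 2 (hr.trans_le (le_max_right u r)).ne'

lemma continuous_cutoff {r : ℝ} (hr : 0 < r) : Continuous (cutoff r) :=
  (continuous_div_max_sq hr).mul (by fun_prop)

@[simp] lemma cutoff_zero (r : ℝ) : cutoff r 0 = 0 := by simp [cutoff]

lemma mul_one_sub_cutoff_sq_le {r u : ℝ} (hr : 0 ≤ r) (hu : 0 ≤ u) :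
    u * (1 - cutoff r u) ^ 2 ≤ r := by
  rcases le_or_gt u r with hur | hur
  · simpa [cutoff, max_eq_right (sub_nonpos.2 hur)] using hur
  have hu0 : 0 < u := hr.trans_lt hur
  have : 1 - cutoff r u = r / u := by
    rw [cutoff, max_eq_left hur.le, max_eq_left (sub_nonneg.2 hur.le)]
    field_simp
    ring
  rw [this, div_pow, mul_div_assoc', div_le_iff₀ (by positivity)]
  nlinarith [mul_le_mul_of_nonneg_left hur.le (mul_nonneg hr hu)]

lemma quasispectrum_star_mul_self_nonneg {B : Type*} [NonUnitalCStarAlgebra B] (b : B) {t : ℝ}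
    (ht : t ∈ quasispectrum ℝ (star b * b)) : 0 ≤ t :=
  let _ := CStarAlgebra.spectralOrder B
  have := CStarAlgebra.spectralOrderedRing B
  quasispectrum_nonneg_of_nonneg _ (star_mul_self_nonneg b) t ht

section CStarAlgebra

variable {B : Type*} [NonUnitalCStarAlgebra B]

lemma cfcₙ_eq_cfcₙ_div_mul_self {x : B} (hx : IsSelfAdjoint x) {φ : ℝ → ℝ} (hφ : Continuous φ)
    {δ : ℝ} (hδ : 0 < δ) (h : ∀ t ≤ δ, φ t = 0) :
    cfcₙ φ x = cfcₙ (fun t => φ t / t) x * x := by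
  have hψ := continuous_div_self_of_eq_zero hφ hδ h
  have : φ = fun t => φ t / t * t := by
    funext t
    rcases eq_or_ne t 0 with rfl | ht
    · simp [h 0 hδ.le]
    · rw [div_mul_cancel₀ _ ht]
  calc cfcₙ φ x = cfcₙ (fun t => φ t / t * t) x := congrArg (cfcₙ · x) this
    _ = cfcₙ (fun t => φ t / t) x * cfcₙ (fun t => t) x :=
      cfcₙ_mul _ _ x hψ.continuousOn (by simp) continuousOn_id rfl
    _ = cfcₙ (fun t => φ t / t) x * x := by rw [cfcₙ_id' ℝ x hx]

lemma cfcₙ_mem_of_eq_zero_of_le (J : TwoSidedIdeal B) {x : B} (hx : IsSelfAdjoint x)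
    (hxJ : x ∈ J) {φ : ℝ → ℝ} (hφ : Continuous φ) {δ : ℝ} (hδ : 0 < δ)
    (h : ∀ t ≤ δ, φ t = 0) : cfcₙ φ x ∈ J := by
  rw [cfcₙ_eq_cfcₙ_div_mul_self hx hφ hδ h]
  exact J.mul_mem_left _ _ hxJ

lemma cfcₙ_cutoff_mem (J : TwoSidedIdeal B) {x : B} {r : ℝ} (hr : 0 < r)
    (h : cfcₙ (fun u => max (u - r) 0) x ∈ J) : cfcₙ (cutoff r) x ∈ J := by
  rw [show cutoff r = fun u => u / max u r ^ 2 * max (u - r) 0 from rfl,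
    cfcₙ_mul _ _ x (continuous_div_max_sq hr).continuousOn (by simp) (by fun_prop) (by simp [hr.le])]
  exact J.mul_mem_left _ _ h

lemma norm_sub_mul_cfcₙ_sq_le (b : B) {f : ℝ → ℝ} (hf : Continuous f) (hf0 : f 0 = 0) {r : ℝ}
    (h : ∀ t, 0 ≤ t → t * (1 - f t) ^ 2 ≤ r) :
    ‖b - b * cfcₙ f (star b * b)‖ ^ 2 ≤ r := by
  set x := star b * b
  set e := cfcₙ f x
  have hx : IsSelfAdjoint x := .star_mul_self b
  have hxe : cfcₙ (fun t => t - t * f t) x = x - x * e := by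
    rw [cfcₙ_sub _ _ x, cfcₙ_mul (fun t => t) f x, cfcₙ_id' ℝ x]
  have hg : cfcₙ (fun t => t * (1 - f t) ^ 2) x = (x - x * e) - e * (x - x * e) := by
    rw [← hxe, ← cfcₙ_mul f _ x, ← cfcₙ_sub _ _ x]
    congr 1; funext t; ring
  have hstar : star (b - b * e) * (b - b * e) = (x - x * e) - e * (x - x * e) := by
    have he : star e = e := (cfcₙ_predicate f x : IsSelfAdjoint e).star_eq
    simp only [star_sub, star_mul, he, x]
    noncomm_ring
  rw [sq, ← CStarRing.norm_star_mul_self, hstar, ← hg]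
  refine norm_cfcₙ_le fun t ht => ?_
  have ht0 := quasispectrum_star_mul_self_nonneg b ht
  rw [Real.norm_of_nonneg (by positivity)]
  exact h t ht0

lemma infDist_cfcₙ_le_pow (J : TwoSidedIdeal B) {x : B} (hx : IsSelfAdjoint x) {s : ℝ}
    (hs : 0 < s) (n : ℕ) {φ : ℝ → ℝ} (hφ : Continuous φ) (h : ∀ t ≤ s, φ t = 0) :
    infDist (cfcₙ φ x) J ≤ infDist x J ^ n * ‖cfcₙ (fun t => φ t / t ^ n) x‖ := by
  induction n generalizing φ with
  | zero =>
    simpa using infDist_le_dist_of_mem (x := cfcₙ φ x) J.zero_mem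
  | succ n ih =>
    rw [cfcₙ_eq_cfcₙ_div_mul_self hx hφ hs h]
    calc infDist (cfcₙ (fun t => φ t / t) x * x) J
        ≤ infDist (cfcₙ (fun t => φ t / t) x) J * infDist x J := J.infDist_mul_le_s9 _ _
      _ ≤ infDist x J ^ n * ‖cfcₙ (fun t => φ t / t / t ^ n) x‖ * infDist x J := by
        refine mul_le_mul_of_nonneg_right ?_ infDist_nonneg
        exact ih (continuous_div_self_of_eq_zero hφ hs h) fun t ht => by simp [h t ht]
      _ = infDist x J ^ (n + 1) * ‖cfcₙ (fun t => φ t / t ^ (n + 1)) x‖ := by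
        simp only [div_div, ← pow_succ']
        ring

lemma cfcₙ_max_sub_mem_of_infDist_lt (J : TwoSidedIdeal B) (hJ : IsClosed (J : Set B)) {x : B}
    (hx : IsSelfAdjoint x) {s : ℝ} (hs : infDist x J < s) :
    cfcₙ (fun t => max (t - s) 0) x ∈ J := by
  set r := infDist x J
  have hr : 0 ≤ r := infDist_nonneg
  have hs0 : 0 < s := hr.trans_lt hs
  have hbound : ∀ n : ℕ, infDist (cfcₙ (fun t => max (t - s) 0) x) J ≤ r * (r / s) ^ n := by
    intro n
    calc infDist (cfcₙ (fun t => max (t - s) 0) x) J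
        ≤ r ^ (n + 1) * ‖cfcₙ (fun t => max (t - s) 0 / t ^ (n + 1)) x‖ :=
          infDist_cfcₙ_le_pow J hx hs0 (n + 1) (by fun_prop) fun t ht =>
            max_eq_right (sub_nonpos.2 ht)
      _ ≤ r ^ (n + 1) * (s ^ n)⁻¹ := by
        gcongr
        exact norm_cfcₙ_le fun t _ => norm_max_sub_div_pow_succ_le hs0 n t
      _ = r * (r / s) ^ n := by rw [div_pow, pow_succ]; ring
  have hlim : Tendsto (fun n : ℕ => r * (r / s) ^ n) atTop (𝓝 0) := by
    simpa using (tendsto_pow_atTop_nhds_zero_of_lt_one (by positivity)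
      ((div_lt_one hs0).2 hs)).const_mul r
  rw [SetLike.mem_coe.symm, hJ.mem_iff_infDist_zero ⟨0, J.zero_mem⟩]
  exact le_antisymm (ge_of_tendsto' hlim hbound) infDist_nonneg

lemma cfcₙ_max_sub_mem_of_infDist_le (J : TwoSidedIdeal B) (hJ : IsClosed (J : Set B)) {x : B}
    (hx : IsSelfAdjoint x) {s : ℝ} (hs : infDist x J ≤ s) :
    cfcₙ (fun t => max (t - s) 0) x ∈ J := by
  have hs0 : 0 ≤ s := infDist_nonneg.trans hs
  rw [← SetLike.mem_coe, ← hJ.closure_eq, Metric.mem_closure_iff]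
  intro ε hε
  refine ⟨_, cfcₙ_max_sub_mem_of_infDist_lt J hJ hx (s := s + ε / 2) (by linarith), ?_⟩
  rw [dist_eq_norm, ← cfcₙ_sub (fun t => max (t - s) 0) (fun t => max (t - (s + ε / 2)) 0) x
    (by fun_prop) (by simp [hs0]) (by fun_prop) (max_eq_right (by linarith))]
  refine (norm_cfcₙ_le fun t _ => ?_).trans_lt (half_lt_self hε)
  calc ‖max (t - s) 0 - max (t - (s + ε / 2)) 0‖ ≤ |(t - s) - (t - (s + ε / 2))| :=
        abs_max_sub_max_le_abs _ _ _
    _ = ε / 2 := by rw [abs_of_nonneg] <;> linarith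

lemma TwoSidedIdeal.star_mem_of_isClosed (J : TwoSidedIdeal B) (hJ : IsClosed (J : Set B))
    {j : B} (hj : j ∈ J) : star j ∈ J := by
  have hsq : ∀ ε > 0, infDist (star j) J ^ 2 ≤ ε := by
    intro ε hε
    have he : cfcₙ (cutoff ε) (star (star j) * star j) ∈ J := by
      rw [star_star]
      exact cfcₙ_cutoff_mem J hε (cfcₙ_mem_of_eq_zero_of_le J (.mul_star_self j)
        (J.mul_mem_right _ _ hj) (by fun_prop) hε fun t ht => max_eq_right (by linarith))
    calc infDist (star j) J ^ 2
        ≤ ‖star j - star j * cfcₙ (cutoff ε) (star (star j) * star j)‖ ^ 2 := by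
          refine pow_le_pow_left₀ infDist_nonneg ?_ 2
          rw [← dist_eq_norm]
          exact infDist_le_dist_of_mem (J.mul_mem_left _ _ he)
      _ ≤ ε := norm_sub_mul_cfcₙ_sq_le _ (continuous_cutoff hε) (cutoff_zero ε) fun _ hu =>
          mul_one_sub_cutoff_sq_le hε.le hu
  have hzero : infDist (star j) J = 0 :=
    pow_eq_zero_iff two_ne_zero |>.1 <| le_antisymm
      (le_of_forall_pos_le_add fun ε hε => by simpa using hsq ε hε) (by positivity)
  rwa [← SetLike.mem_coe, hJ.mem_iff_infDist_zero ⟨0, J.zero_mem⟩]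

end CStarAlgebra

/-- Closed two-sided ideals in C*-algebras are proximinal: the distance from `b` to `J`
(which is by definition the quotient norm `‖b + J‖` in `B/J`) is attained. -/
theorem stmt_9 {B : Type*} [NonUnitalCStarAlgebra B]
    (J : TwoSidedIdeal B) (hJ : IsClosed (J : Set B)) (b : B) :
    ∃ j ∈ J, ‖b - j‖ = Metric.infDist b (J : Set B) := by
  set d := infDist b (J : Set B)
  rcases (infDist_nonneg : 0 ≤ d).eq_or_lt with hd | hd
  · refine ⟨b, ?_, by rw [sub_self, norm_zero]; exact hd⟩
    rw [← SetLike.mem_coe, hJ.mem_iff_infDist_zero ⟨0, J.zero_mem⟩]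
    exact hd.symm
  have hstar : ∀ j ∈ J, star j ∈ J := fun j => J.star_mem_of_isClosed hJ
  have hx : infDist (star b * b) J ≤ d ^ 2 := by
    simpa [sq, J.infDist_star hstar] using J.infDist_mul_le_s9 (star b) b
  have he : cfcₙ (cutoff (d ^ 2)) (star b * b) ∈ J :=
    cfcₙ_cutoff_mem J (by positivity) (cfcₙ_max_sub_mem_of_infDist_le J hJ (.star_mul_self b) hx)
  refine ⟨_, J.mul_mem_left b _ he, le_antisymm ?_ ?_⟩
  · refine (pow_le_pow_iff_left₀ (norm_nonneg _) hd.le two_ne_zero).1 ?_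
    exact norm_sub_mul_cfcₙ_sq_le b (continuous_cutoff (by positivity)) (cutoff_zero _)
      fun _ hu => mul_one_sub_cutoff_sq_le (sq_nonneg d) hu
  · rw [← dist_eq_norm]
    exact infDist_le_dist_of_mem (J.mul_mem_left b _ he)
end

section
/- Let A, B ⊆ B(H) be C*-algebras with A ⊆_γ B, and suppose that for all x ∈ B(H), d(x, A') ≤ k·‖ad(x)|_A‖ (property LD_k). Then B' ⊆_{2kγ} A', i.e. for every y ∈ B' there exists z ∈ A' with ‖y − z‖ ≤ 2kγ‖y‖. -/
/-!
For `y ∈ B'` and `a` in the unit ball of `A`, choosing `b ∈ B` with `‖a - b‖ ≤ γ` gives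
`‖ya - ay‖ = ‖y(a - b) - (a - b)y‖ ≤ 2γ‖y‖`, so `LD_k` puts `y` within distance `2kγ‖y‖` of `A'`.
This distance is attained because `A'` is closed in the weak operator topology, in which the
closed balls of `B(H)` are compact: a bounded family of operators has a WOT limit along any
ultrafilter, assembled by the Riesz representation from the ultralimits of its coefficients
`⟪T x, y⟫`.
-/

variable {H : Type*} [NormedAddCommGroup H] [InnerProductSpace ℂ H] [CompleteSpace H]

open Filter Topology InnerProductSpace

lemma Ultrafilter.exists_tendsto_of_eventually_norm_le {ι V : Type*} [NormedAddCommGroup V]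
    [ProperSpace V] (l : Ultrafilter ι) {f : ι → V} {C : ℝ} (h : ∀ᶠ i in l, ‖f i‖ ≤ C) :
    ∃ c, Tendsto f l (𝓝 c) := by
  obtain ⟨c, -, hc⟩ := (isCompact_closedBall (0 : V) C).ultrafilter_le_nhds (l.map f)
    (le_principal_iff.2 (mem_map.2 (h.mono fun _ hi ↦ mem_closedBall_zero_iff.2 hi)))
  exact ⟨c, hc⟩

theorem norm_mul_sub_mul_le_of_commute {R : Type*} [NonUnitalNormedRing R] {y a b : R}
    (h : Commute y b) : ‖y * a - a * y‖ ≤ 2 * ‖y‖ * ‖a - b‖ :=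
  calc ‖y * a - a * y‖ = ‖y * (a - b) - (a - b) * y‖ := by
        rw [mul_sub, sub_mul, h.eq, sub_sub_sub_cancel_right]
    _ ≤ ‖y‖ * ‖a - b‖ + ‖a - b‖ * ‖y‖ :=
        (norm_sub_le _ _).trans (add_le_add (norm_mul_le _ _) (norm_mul_le _ _))
    _ = 2 * ‖y‖ * ‖a - b‖ := by ring

namespace ContinuousLinearMapWOT

instance {𝕜 F : Type*} [NormedField 𝕜] [AddCommGroup F] [TopologicalSpace F]
    [IsTopologicalAddGroup F] [Module 𝕜 F] [ContinuousConstSMul 𝕜 F] :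
    SeparatelyContinuousMul (F →WOT[𝕜] F) where
  continuous_const_mul := continuous_postcomp _
  continuous_mul_const := continuous_precomp _

theorem isClosed_preimage_centralizer {𝕜 F : Type*} [RCLike 𝕜] [NormedAddCommGroup F]
    [NormedSpace 𝕜 F] (S : Set (F →L[𝕜] F)) :
    IsClosed (toCLM ⁻¹' S.centralizer : Set (F →WOT[𝕜] F)) := by
  have hpre : (toCLM ⁻¹' S.centralizer : Set (F →WOT[𝕜] F)) = (toCLM ⁻¹' S).centralizer := by
    ext A
    simp only [Set.mem_preimage, Set.mem_centralizer_iff]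
    exact ⟨fun h m hm ↦ toCLM_injective (h _ hm), fun h m hm ↦ congrArg toCLM (h (ofCLM m) hm)⟩
  exact hpre ▸ Set.isClosed_centralizer _

variable {𝕜 E F : Type*} [RCLike 𝕜] [NormedAddCommGroup E] [NormedSpace 𝕜 E]
  [NormedAddCommGroup F] [InnerProductSpace 𝕜 F] [CompleteSpace F]

theorem exists_tendsto_of_eventually_norm_le {ι : Type*} (l : Ultrafilter ι) (T : ι → E →L[𝕜] F)
    {M : ℝ} (hT : ∀ᶠ i in l, ‖T i‖ ≤ M) :
    ∃ A : E →L[𝕜] F, ‖A‖ ≤ M ∧ Tendsto (fun i ↦ ofCLM (T i)) l (𝓝 (ofCLM A)) := by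
  have hM : 0 ≤ M := by
    obtain ⟨i, hi⟩ := hT.exists
    exact (norm_nonneg _).trans hi
  have hbound : ∀ x y, ∀ᶠ i in l, ‖⟪T i x, y⟫_𝕜‖ ≤ M * ‖x‖ * ‖y‖ := fun x y ↦
    hT.mono fun i hi ↦ (norm_inner_le_norm _ _).trans <| by
      gcongr; exact (T i).le_of_opNorm_le hi x
  choose f hf using fun x y ↦ l.exists_tendsto_of_eventually_norm_le (hbound x y)
  have hf_le (x y) : ‖f x y‖ ≤ M * ‖x‖ * ‖y‖ := le_of_tendsto (hf x y).norm (hbound x y)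
  let φ (x : E) : StrongDual 𝕜 F :=
    (linearMapOfTendsto (f x) (fun i ↦ innerₛₗ 𝕜 (T i x))
      (tendsto_pi_nhds.2 fun y ↦ hf x y)).mkContinuous (M * ‖x‖) fun y ↦ hf_le x y
  let w (x : E) : F := (InnerProductSpace.toDual 𝕜 F).symm (φ x)
  have hw (x y) : ⟪w x, y⟫_𝕜 = f x y := InnerProductSpace.toDual_symm_apply
  have hw_add (x x') : w (x + x') = w x + w x' := by
    refine ext_inner_right 𝕜 fun y ↦ ?_
    rw [inner_add_left, hw, hw, hw]
    refine tendsto_nhds_unique (hf _ y) ?_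
    simpa only [map_add, inner_add_left] using (hf x y).add (hf x' y)
  have hw_smul (c : 𝕜) (x) : w (c • x) = c • w x := by
    refine ext_inner_right 𝕜 fun y ↦ ?_
    rw [inner_smul_left, hw, hw]
    refine tendsto_nhds_unique (hf _ y) ?_
    simpa only [map_smul, inner_smul_left] using (hf x y).const_mul (starRingEnd 𝕜 c)
  have hw_le (x) : ‖w x‖ ≤ M * ‖x‖ := by
    rw [LinearIsometryEquiv.norm_map]
    exact LinearMap.mkContinuous_norm_le _ (by positivity) _
  refine ⟨LinearMap.mkContinuous ⟨⟨w, hw_add⟩, hw_smul⟩ M hw_le,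
    LinearMap.mkContinuous_norm_le _ hM _, ?_⟩
  refine tendsto_iff_forall_inner_apply_tendsto.2 fun x y ↦ ?_
  have hlim : Tendsto (fun i ↦ ⟪y, T i x⟫_𝕜) l (𝓝 ⟪y, w x⟫_𝕜) := by
    simpa only [← hw, RCLike.star_def, inner_conj_symm] using (hf x y).star
  exact hlim

theorem isCompact_preimage_closedBall (A : E →L[𝕜] F) (r : ℝ) :
    IsCompact (toCLM ⁻¹' Metric.closedBall A r : Set (E →WOT[𝕜] F)) := by
  refine isCompact_iff_ultrafilter_le_nhds.2 fun l hl ↦ ?_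
  have hT : ∀ᶠ B in (l : Filter (E →WOT[𝕜] F)), ‖toCLM B - A‖ ≤ r :=
    Filter.mem_of_superset (le_principal_iff.1 hl) fun _ hB ↦ mem_closedBall_iff_norm.1 hB
  obtain ⟨D, hD, hlim⟩ := exists_tendsto_of_eventually_norm_le l (fun B ↦ toCLM B - A) hT
  refine ⟨ofCLM (D + A), mem_closedBall_iff_norm.2 (by rwa [add_sub_cancel_right]), ?_⟩
  simpa [Tendsto] using hlim.add_const (ofCLM A)

theorem exists_infDist_eq_dist {S : Set (E →L[𝕜] F)}
    (hS : IsClosed (toCLM ⁻¹' S : Set (E →WOT[𝕜] F))) (hne : S.Nonempty) (A : E →L[𝕜] F) :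
    ∃ B ∈ S, Metric.infDist A S = dist A B := by
  set d := Metric.infDist A S
  let K (n : ℕ) : Set (E →WOT[𝕜] F) := toCLM ⁻¹' (S ∩ Metric.closedBall A (d + 1 / (n + 1)))
  have hK (n : ℕ) : IsCompact (K n) := (isCompact_preimage_closedBall A _).inter_left hS
  have hK_mono (n : ℕ) : K (n + 1) ⊆ K n := by
    refine Set.preimage_mono <| Set.inter_subset_inter_right _ <|
      Metric.closedBall_subset_closedBall ?_
    gcongr
    linarith
  have hK_ne (n : ℕ) : (K n).Nonempty := by
    obtain ⟨B, hBS, hAB⟩ :=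
      (Metric.infDist_lt_iff hne).1 (lt_add_of_pos_right d Nat.one_div_pos_of_nat)
    exact ⟨ofCLM B, hBS, by rw [Metric.mem_closedBall, dist_comm]; exact hAB.le⟩
  obtain ⟨B, hB⟩ := IsCompact.nonempty_iInter_of_sequence_nonempty_isCompact_isClosed K hK_mono
    hK_ne (hK 0) fun n ↦ (hK n).isClosed
  simp only [Set.mem_iInter, K, Set.mem_preimage, Set.mem_inter_iff, Metric.mem_closedBall] at hB
  refine ⟨toCLM B, (hB 0).1, le_antisymm (Metric.infDist_le_dist_of_mem (hB 0).1) ?_⟩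
  refine le_of_forall_pos_lt_add fun ε hε ↦ ?_
  obtain ⟨n, hn⟩ := exists_nat_one_div_lt hε
  rw [dist_comm]
  linarith [(hB n).2]

end ContinuousLinearMapWOT

theorem derivRestrictNorm_le_of_mem_centralizer {S T : Set (H →L[ℂ] H)} {γ : ℝ} (hγ : 0 ≤ γ)
    (hnear : ∀ a ∈ S, ∃ b ∈ T, ‖a - b‖ ≤ γ * ‖a‖) {y : H →L[ℂ] H} (hy : y ∈ T.centralizer) :
    derivRestrictNorm S y ≤ 2 * γ * ‖y‖ := by
  refine Real.sSup_le ?_ (by positivity)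
  rintro _ ⟨a, ⟨ha, ha_le⟩, rfl⟩
  obtain ⟨b, hb, hab⟩ := hnear a ha
  calc ‖y * a - a * y‖ ≤ 2 * ‖y‖ * ‖a - b‖ := norm_mul_sub_mul_le_of_commute (hy b hb).symm
    _ ≤ 2 * ‖y‖ * γ := by
      gcongr
      exact hab.trans (mul_le_of_le_one_right hγ (mem_closedBall_zero_iff.1 ha_le))
    _ = 2 * γ * ‖y‖ := by ring

theorem stmt_15_general (A B : NonUnitalStarSubalgebra ℂ (H →L[ℂ] H))
    (γ k : ℝ) (hγ : 0 ≤ γ) (hk : 0 < k)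
    (hnear : ∀ a ∈ A, ∃ b ∈ B, ‖a - b‖ ≤ γ * ‖a‖)
    (hLD : HasLD (A : Set (H →L[ℂ] H)) k) :
    ∀ y ∈ Set.centralizer (B : Set (H →L[ℂ] H)),
      ∃ z ∈ Set.centralizer (A : Set (H →L[ℂ] H)), ‖y - z‖ ≤ 2 * k * γ * ‖y‖ := by
  intro y hy
  have hdist : Metric.infDist y (A : Set (H →L[ℂ] H)).centralizer ≤ 2 * k * γ * ‖y‖ :=
    calc _ ≤ k * derivRestrictNorm A y := hLD y
      _ ≤ k * (2 * γ * ‖y‖) :=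
        mul_le_mul_of_nonneg_left (derivRestrictNorm_le_of_mem_centralizer hγ hnear hy) hk.le
      _ = 2 * k * γ * ‖y‖ := by ring
  obtain ⟨z, hz, hyz⟩ := ContinuousLinearMapWOT.exists_infDist_eq_dist
    (ContinuousLinearMapWOT.isClosed_preimage_centralizer _) ⟨0, Set.zero_mem_centralizer⟩ y
  exact ⟨z, hz, by rwa [← dist_eq_norm, ← hyz]⟩

/-- If `A ⊆_γ B` and `A` has property `LD_k`, then `B' ⊆_{2kγ} A'`. -/
theorem stmt_15 (A B : NonUnitalStarSubalgebra ℂ (H →L[ℂ] H))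
    (hA : IsClosed (A : Set (H →L[ℂ] H))) (hB : IsClosed (B : Set (H →L[ℂ] H)))
    (γ k : ℝ) (hγ : 0 ≤ γ) (hk : 0 < k)
    (hnear : ∀ a ∈ A, ∃ b ∈ B, ‖a - b‖ ≤ γ * ‖a‖)
    (hLD : HasLD (A : Set (H →L[ℂ] H)) k) :
    ∀ y ∈ Set.centralizer (B : Set (H →L[ℂ] H)),
      ∃ z ∈ Set.centralizer (A : Set (H →L[ℂ] H)), ‖y - z‖ ≤ 2 * k * γ * ‖y‖ :=
  stmt_15_general A B γ k hγ hk hnear hLD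
end

section
/- Let I be a closed two-sided ideal of a C*-algebra B and let I₁ ⊆ I₂ be closed two-sided ideals of B. Let A ⊆ B(H) with A ⊆_γ B, and suppose J₁, J₂ are closed ideals of A such that J_i ⊆_{γ'} I_i for γ' < 1/2 and for every x ∈ A, d(x, I_i) ≤ λγ‖x‖ implies d(x, J_i) ≤ μγ‖x‖ with μγ < 1 (for i = 1,2, with the appropriate constants). Then J₁ ⊆ J₂. -/
/-! For `x ∈ J₁`, nearness of `J₁` to `I₁ ⊆ I₂` and the transfer hypothesis give
`d(x, J₂) ≤ c‖x‖` with `c = μγ < 1`. Such a near inclusion of closed ideals forces `J₁ ⊆ J₂`.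
For self-adjoint `x ∈ J₁`, a functional-calculus cutoff `u = f(x) ∈ J₁` with `‖u‖ ≤ 1` and
`ux ≈ x` moves any `k ∈ J₂` near `x` to `uk ∈ J₁ ∩ J₂`, still near `x`. So `d(x, J₂)` is almost
attained at some `j ∈ J₁ ∩ J₂`, and then `d(x, J₂) = d(x - j, J₂) ≤ c‖x - j‖ ≈ c · d(x, J₂)`,
whence `d(x, J₂) = 0`. A general `x` is handled through its real and imaginary parts. -/

open Metric ComplexStarModule

lemma Metric.infDist_sub_of_mem {G S : Type*} [SeminormedAddCommGroup G] [SetLike S G]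
    [AddSubgroupClass S G] {s : S} (x : G) {j : G} (hj : j ∈ s) :
    infDist (x - j) s = infDist x s := by
  change infDist _ (AddSubgroup.ofClass s : Set G) = infDist _ (AddSubgroup.ofClass s : Set G)
  rw [← QuotientAddGroup.norm_mk, ← QuotientAddGroup.norm_mk, QuotientAddGroup.mk_sub,
    (QuotientAddGroup.eq_zero_iff j).2 hj, sub_zero]

namespace NonUnitalStarSubalgebra

variable {E : Type*} [NonUnitalCStarAlgebra E] {S J₁ J₂ : NonUnitalStarSubalgebra ℂ E}

lemma realPart_mem {x : E} (hx : x ∈ S) : (ℜ x : E) ∈ S := by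
  rw [realPart_apply_coe, ← Complex.coe_smul]
  exact SMulMemClass.smul_mem _ (add_mem hx (star_mem hx))

lemma imaginaryPart_mem {x : E} (hx : x ∈ S) : (ℑ x : E) ∈ S := by
  rw [← neg_neg (ℑ x), ← realPart_I_smul, NegMemClass.coe_neg]
  exact neg_mem (realPart_mem (SMulMemClass.smul_mem _ hx))

lemma exists_norm_le_one_norm_mul_sub_le (hS : IsClosed (S : Set E)) {x : E} (hx : x ∈ S)
    (hsa : IsSelfAdjoint x) {δ : ℝ} (hδ : 0 < δ) : ∃ u ∈ S, ‖u‖ ≤ 1 ∧ ‖u * x - x‖ ≤ δ := by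
  set f : ℝ → ℝ := fun t => min (|t| / δ) 1
  have hf : Continuous f := (continuous_abs.div_const δ).min continuous_const
  have hf_nonneg (t : ℝ) : 0 ≤ f t := le_min (by positivity) zero_le_one
  have hf_le (t : ℝ) : f t ≤ 1 := min_le_right _ _
  refine ⟨cfcₙ f x, cfcₙ_mem (hs := hS) f hx, norm_cfcₙ_le fun t _ => ?_, ?_⟩
  · rw [Real.norm_of_nonneg (hf_nonneg t)]; exact hf_le t
  have hcfc : cfcₙ f x * x - x = cfcₙ (fun t => f t * t - t) x := by
    rw [cfcₙ_sub (fun t => f t * t) (fun t => t) x (hf := (hf.mul continuous_id).continuousOn)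
      (hg := continuous_id.continuousOn), cfcₙ_mul f (fun t => t) x (hf := hf.continuousOn)
      (hg := continuous_id.continuousOn), cfcₙ_id' ℝ x]
  rw [hcfc]
  refine norm_cfcₙ_le fun t _ => ?_
  rw [Real.norm_eq_abs, show f t * t - t = -(t * (1 - f t)) by ring, abs_neg, abs_mul,
    abs_of_nonneg (sub_nonneg.2 (hf_le t))]
  rcases le_or_gt |t| δ with ht | ht
  · nlinarith [hf_nonneg t, abs_nonneg t]
  · have : f t = 1 := min_eq_right ((one_le_div hδ).2 ht.le)
    simp [this, hδ.le]

lemma infDist_inf_le_infDist (hJ₁ : IsClosed (J₁ : Set E))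
    (hmul : ∀ u ∈ J₁, ∀ k ∈ J₂, u * k ∈ J₁ ⊓ J₂) {x : E} (hx : x ∈ J₁) (hsa : IsSelfAdjoint x) :
    infDist x (J₁ ⊓ J₂ : NonUnitalStarSubalgebra ℂ E) ≤ infDist x J₂ := by
  refine (le_infDist ⟨0, zero_mem _⟩).2 fun k hk => le_of_forall_pos_le_add fun δ hδ => ?_
  obtain ⟨u, hu, hu_norm, hux⟩ := exists_norm_le_one_norm_mul_sub_le hJ₁ hx hsa hδ
  calc infDist x (J₁ ⊓ J₂ : NonUnitalStarSubalgebra ℂ E) ≤ ‖x - u * k‖ := by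
        simpa only [dist_eq_norm] using infDist_le_dist_of_mem (hmul u hu k hk)
    _ = ‖u * (x - k) - (u * x - x)‖ := by noncomm_ring
    _ ≤ ‖u‖ * ‖x - k‖ + ‖u * x - x‖ := (norm_sub_le _ _).trans (by gcongr; exact norm_mul_le _ _)
    _ ≤ dist x k + δ := by
        rw [dist_eq_norm]
        gcongr
        exact mul_le_of_le_one_left (norm_nonneg _) hu_norm

lemma mem_of_isSelfAdjoint_of_forall_infDist_le_mul_norm (hJ₁ : IsClosed (J₁ : Set E))
    (hJ₂ : IsClosed (J₂ : Set E)) (hmul : ∀ u ∈ J₁, ∀ k ∈ J₂, u * k ∈ J₁ ⊓ J₂) {c : ℝ}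
    (hc : c < 1) (hnear : ∀ x ∈ J₁, infDist x J₂ ≤ c * ‖x‖) {x : E} (hx : x ∈ J₁)
    (hsa : IsSelfAdjoint x) : x ∈ J₂ := by
  set c' := max c 0
  have hc' : c' < 1 := max_lt hc one_pos
  have hc'0 : 0 ≤ c' := le_max_right _ _
  set D := infDist x J₂
  have hD : D ≤ c' * D := le_of_forall_pos_le_add fun δ hδ => by
    obtain ⟨j, hj, hxj⟩ := (infDist_lt_iff ⟨0, zero_mem _⟩).1
      ((infDist_inf_le_infDist hJ₁ hmul hx hsa).trans_lt (lt_add_of_pos_right D hδ))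
    calc D = infDist (x - j) J₂ := (infDist_sub_of_mem x hj.2).symm
      _ ≤ c * ‖x - j‖ := hnear _ (sub_mem hx hj.1)
      _ ≤ c' * ‖x - j‖ := by gcongr; exact le_max_left _ _
      _ ≤ c' * (D + δ) := mul_le_mul_of_nonneg_left (dist_eq_norm x j ▸ hxj.le) hc'0
      _ ≤ c' * D + δ := by nlinarith
  rw [← SetLike.mem_coe, hJ₂.mem_iff_infDist_zero ⟨0, zero_mem _⟩]
  nlinarith [infDist_nonneg (x := x) (s := (J₂ : Set E))]

lemma le_of_forall_infDist_le_mul_norm (hJ₁ : IsClosed (J₁ : Set E))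
    (hJ₂ : IsClosed (J₂ : Set E)) (hmul : ∀ u ∈ J₁, ∀ k ∈ J₂, u * k ∈ J₁ ⊓ J₂) {c : ℝ}
    (hc : c < 1) (hnear : ∀ x ∈ J₁, infDist x J₂ ≤ c * ‖x‖) : J₁ ≤ J₂ := by
  have hsa_mem {y : E} (hy : y ∈ J₁) (hsa : IsSelfAdjoint y) : y ∈ J₂ :=
    mem_of_isSelfAdjoint_of_forall_infDist_le_mul_norm hJ₁ hJ₂ hmul hc hnear hy hsa
  intro x hx
  rw [← realPart_add_I_smul_imaginaryPart x]
  exact add_mem (hsa_mem (realPart_mem hx) (ℜ x).2)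
    (SMulMemClass.smul_mem _ (hsa_mem (imaginaryPart_mem hx) (ℑ x).2))

end NonUnitalStarSubalgebra

theorem stmt_19_general {H : Type*} [NormedAddCommGroup H] [InnerProductSpace ℂ H] [CompleteSpace H]
    (A I₁ I₂ J₁ J₂ : NonUnitalStarSubalgebra ℂ (H →L[ℂ] H))
    (hJ₁cl : IsClosed (J₁ : Set (H →L[ℂ] H))) (hJ₂cl : IsClosed (J₂ : Set (H →L[ℂ] H)))
    (hI₁₂ : I₁ ≤ I₂)
    -- `J₁, J₂` are two-sided ideals of `A`
    (hJ₁A : J₁ ≤ A) (hJ₂A : J₂ ≤ A)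
    (hJ₁ideal : ∀ a ∈ A, ∀ x ∈ J₁, a * x ∈ J₁ ∧ x * a ∈ J₁)
    (hJ₂ideal : ∀ a ∈ A, ∀ x ∈ J₂, a * x ∈ J₂ ∧ x * a ∈ J₂)
    -- constants
    (γ γ' lam μ : ℝ)
    (hγ'lam : γ' ≤ lam * γ) (hμγ : μ * γ < 1)
    -- near inclusions
    (hJ₁I₁ : ∀ x ∈ J₁, ∃ y ∈ I₁, ‖x - y‖ ≤ γ' * ‖x‖)
    -- distance transfer hypotheses
    (htrans₂ : ∀ x ∈ A, Metric.infDist x (I₂ : Set (H →L[ℂ] H)) ≤ lam * γ * ‖x‖ →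
      Metric.infDist x (J₂ : Set (H →L[ℂ] H)) ≤ μ * γ * ‖x‖) :
    J₁ ≤ J₂ := by
  refine NonUnitalStarSubalgebra.le_of_forall_infDist_le_mul_norm hJ₁cl hJ₂cl
    (fun u hu k hk => ⟨(hJ₁ideal k (hJ₂A hk) u hu).2, (hJ₂ideal u (hJ₁A hu) k hk).1⟩) hμγ
    fun x hx => htrans₂ x (hJ₁A hx) ?_
  obtain ⟨y, hy, hxy⟩ := hJ₁I₁ x hx
  calc infDist x I₂ ≤ ‖x - y‖ := by
        simpa only [dist_eq_norm] using infDist_le_dist_of_mem (hI₁₂ hy)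
    _ ≤ γ' * ‖x‖ := hxy
    _ ≤ lam * γ * ‖x‖ := by gcongr

/-- Transfer of nested ideals through a near inclusion: if `A ⊆_γ B`, `I₁ ⊆ I₂` are closed
ideals of `B`, and `J₁, J₂` are closed ideals of `A` with `J_i ⊆_{γ'} I_i` (`γ' < 1/2`,
with `γ' ≤ λγ`) such that for every `x ∈ A`, `d(x, I_i) ≤ λγ‖x‖` implies
`d(x, J_i) ≤ μγ‖x‖` where `μγ < 1`, then `J₁ ⊆ J₂`. -/
theorem stmt_19 {H : Type*} [NormedAddCommGroup H] [InnerProductSpace ℂ H] [CompleteSpace H]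
    (A B I₁ I₂ J₁ J₂ : NonUnitalStarSubalgebra ℂ (H →L[ℂ] H))
    (hAcl : IsClosed (A : Set (H →L[ℂ] H))) (hBcl : IsClosed (B : Set (H →L[ℂ] H)))
    (hI₁cl : IsClosed (I₁ : Set (H →L[ℂ] H))) (hI₂cl : IsClosed (I₂ : Set (H →L[ℂ] H)))
    (hJ₁cl : IsClosed (J₁ : Set (H →L[ℂ] H))) (hJ₂cl : IsClosed (J₂ : Set (H →L[ℂ] H)))
    -- `I₁ ⊆ I₂` are two-sided ideals of `B`
    (hI₁B : I₁ ≤ B) (hI₂B : I₂ ≤ B) (hI₁₂ : I₁ ≤ I₂)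
    (hI₁ideal : ∀ b ∈ B, ∀ x ∈ I₁, b * x ∈ I₁ ∧ x * b ∈ I₁)
    (hI₂ideal : ∀ b ∈ B, ∀ x ∈ I₂, b * x ∈ I₂ ∧ x * b ∈ I₂)
    -- `J₁, J₂` are two-sided ideals of `A`
    (hJ₁A : J₁ ≤ A) (hJ₂A : J₂ ≤ A)
    (hJ₁ideal : ∀ a ∈ A, ∀ x ∈ J₁, a * x ∈ J₁ ∧ x * a ∈ J₁)
    (hJ₂ideal : ∀ a ∈ A, ∀ x ∈ J₂, a * x ∈ J₂ ∧ x * a ∈ J₂)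
    -- constants
    (γ γ' lam μ : ℝ) (hγ : 0 ≤ γ) (hγ' : 0 ≤ γ') (hγ'2 : γ' < 1 / 2)
    (hγ'lam : γ' ≤ lam * γ) (hμγ : μ * γ < 1)
    -- near inclusions
    (hAB : ∀ a ∈ A, ∃ b ∈ B, ‖a - b‖ ≤ γ * ‖a‖)
    (hJ₁I₁ : ∀ x ∈ J₁, ∃ y ∈ I₁, ‖x - y‖ ≤ γ' * ‖x‖)
    (hJ₂I₂ : ∀ x ∈ J₂, ∃ y ∈ I₂, ‖x - y‖ ≤ γ' * ‖x‖)
    -- distance transfer hypotheses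
    (htrans₁ : ∀ x ∈ A, Metric.infDist x (I₁ : Set (H →L[ℂ] H)) ≤ lam * γ * ‖x‖ →
      Metric.infDist x (J₁ : Set (H →L[ℂ] H)) ≤ μ * γ * ‖x‖)
    (htrans₂ : ∀ x ∈ A, Metric.infDist x (I₂ : Set (H →L[ℂ] H)) ≤ lam * γ * ‖x‖ →
      Metric.infDist x (J₂ : Set (H →L[ℂ] H)) ≤ μ * γ * ‖x‖) :
    J₁ ≤ J₂ :=
  stmt_19_general A I₁ I₂ J₁ J₂ hJ₁cl hJ₂cl hI₁₂ hJ₁A hJ₂A hJ₁ideal hJ₂ideal γ γ' lam μ hγ'lam hμγ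
    hJ₁I₁ htrans₂
end
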